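/- Let 0 < p < 1 and let W be the infinite diagonal matrix with diagonal entries μ_j ∈ ℂ, j ≥ 0. Then W ∈ 𝒲_p if and only if ∑_{j≥0} |μ_j|^{p/(1−p)} < ∞, and in that case ‖W‖_{𝒲_p} = (∑_{j≥0} |μ_j|^{p/(1−p)})^{(1−p)/p}. -/

import Mathlib

open scoped BigOperators

/-- The `Ξ_p = ℓ^{2p♯}(ℓ^{2p})` norm of a matrix,
`‖X‖_{Ξ_p} = (∑_j (∑_k |x_{jk}|^{2p})^{1/(1-p)})^{(1-p)/(2p)}`. -/
noncomputable def xiNorm (p : ℝ) (X : ℕ → ℕ → ℂ) : ℝ :=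
  (∑' j, (∑' k, ‖X j k‖ ^ (2 * p)) ^ (1 / (1 - p))) ^ ((1 - p) / (2 * p))

/-- `X` has finite `Ξ_p`-norm: all the sums defining `xiNorm` converge. -/
def HasXiNorm (p : ℝ) (X : ℕ → ℕ → ℂ) : Prop :=
  (∀ j, Summable fun k => ‖X j k‖ ^ (2 * p)) ∧
    Summable fun j => (∑' k, ‖X j k‖ ^ (2 * p)) ^ (1 / (1 - p))

/-- The set of values `‖X‖_{Ξ_p} ‖Y‖_{Ξ_p}` over all factorizations `W = X Yᵗ`,
i.e. `w_{jk} = ∑_l x_{jl} y_{kl}`, with `X, Y` of finite `Ξ_p`-norm.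
`W ∈ 𝒲_p` iff this set is nonempty, and `‖W‖_{𝒲_p}` is its infimum. -/
noncomputable def wReprVals (p : ℝ) (W : ℕ → ℕ → ℂ) : Set ℝ :=
  {c | ∃ X Y : ℕ → ℕ → ℂ, HasXiNorm p X ∧ HasXiNorm p Y ∧
    (∀ j k, HasSum (fun l => X j l * Y k l) (W j k)) ∧
    c = xiNorm p X * xiNorm p Y}

/-!
For any factorization `W = X Yᵗ`, Hölder's inequality in the `j`-th rows (exponents
`2p, 2p, p`, followed by `ℓ^p ⊆ ℓ¹`) gives `|w_jj| ≤ ‖x_j‖_{2p} ‖y_j‖_{2p}`, and Hölder over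
the rows with exponents `2p♯, 2p♯, p♯` gives `‖(w_jj)‖_{ℓ^{p♯}} ≤ ‖X‖_{Ξ_p} ‖Y‖_{Ξ_p}`.
For `W = diag μ` the bound is attained by `X = diag √|μ|`, `Y = diag (μ / √|μ|)`, both of
`Ξ_p`-norm `‖μ‖_{ℓ^{p♯}}^{1/2}`.
-/

open Real

lemma Real.rpow_le_rpow_sub_one_mul {b T s : ℝ} (hb : 0 ≤ b) (hbT : b ≤ T) (hs : 1 ≤ s) :
    b ^ s ≤ T ^ (s - 1) * b := by
  calc b ^ s = b ^ (s - 1) * b := by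
        rw [← rpow_add_one' hb (by linarith), sub_add_cancel]
    _ ≤ T ^ (s - 1) * b := by gcongr

theorem summable_and_L1_le_Lr_tsum_of_nonneg {ι : Type*} {a : ι → ℝ} {r : ℝ}
    (hr0 : 0 < r) (hr1 : r ≤ 1) (ha : ∀ i, 0 ≤ a i) (hs : Summable fun i => a i ^ r) :
    Summable a ∧ ∑' i, a i ≤ (∑' i, a i ^ r) ^ (1 / r) := by
  set T := ∑' i, a i ^ r
  have hT : 0 ≤ T := tsum_nonneg fun i => rpow_nonneg (ha i) r
  have hle : ∀ i, a i ≤ T ^ (1 / r - 1) * a i ^ r := fun i => by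
    have h := rpow_le_rpow_sub_one_mul (rpow_nonneg (ha i) r)
      (hs.le_tsum i fun j _ => rpow_nonneg (ha j) r) (one_le_one_div hr0 hr1)
    rwa [← rpow_mul (ha i), mul_one_div_cancel hr0.ne', rpow_one] at h
  have hsum : Summable a := Summable.of_nonneg_of_le ha hle (hs.mul_left _)
  refine ⟨hsum, (hsum.tsum_le_tsum hle (hs.mul_left _)).trans_eq ?_⟩
  rw [tsum_mul_left, ← rpow_add_one' hT (by simp [hr0.ne']), sub_add_cancel]

theorem norm_le_Lr_mul_Lr_of_hasSum_mul {ι R : Type*} [SeminormedRing R] {x y : ι → R} {z : R}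
    {r : ℝ} (hr0 : 0 < r) (hr2 : r ≤ 2) (hx : Summable fun l => ‖x l‖ ^ r)
    (hy : Summable fun l => ‖y l‖ ^ r) (h : HasSum (fun l => x l * y l) z) :
    ‖z‖ ≤ (∑' l, ‖x l‖ ^ r) ^ (1 / r) * (∑' l, ‖y l‖ ^ r) ^ (1 / r) := by
  have hrr : r.HolderTriple r (r / 2) := ⟨by field_simp; norm_num, hr0, hr0⟩
  have hx0 : ∀ l, 0 ≤ ‖x l‖ := fun l => norm_nonneg _
  have hy0 : ∀ l, 0 ≤ ‖y l‖ := fun l => norm_nonneg _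
  obtain ⟨hsum, hL1⟩ := summable_and_L1_le_Lr_tsum_of_nonneg (half_pos hr0) (by linarith)
    (fun l => mul_nonneg (hx0 l) (hy0 l)) (summable_Lr_of_Lp_Lq_of_nonneg hrr hx0 hy0 hx hy)
  calc ‖z‖ ≤ ∑' l, ‖x l‖ * ‖y l‖ :=
        h.norm_le_of_bounded hsum.hasSum fun l => norm_mul_le _ _
    _ ≤ (∑' l, (‖x l‖ * ‖y l‖) ^ (r / 2)) ^ (1 / (r / 2)) := hL1
    _ ≤ _ := Lr_le_Lp_mul_Lq_tsum_of_nonneg hrr hx0 hy0 hx hy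

noncomputable def rowNorm (p : ℝ) (X : ℕ → ℕ → ℂ) (j : ℕ) : ℝ :=
  (∑' k, ‖X j k‖ ^ (2 * p)) ^ (1 / (2 * p))

section RowNorm

variable {p : ℝ} (X : ℕ → ℕ → ℂ)

lemma rowNorm_nonneg (j : ℕ) : 0 ≤ rowNorm p X j :=
  rpow_nonneg (tsum_nonneg fun _ => rpow_nonneg (norm_nonneg _) _) _

lemma rowNorm_rpow (hp : p ≠ 0) (j : ℕ) :
    rowNorm p X j ^ (2 * (p / (1 - p))) = (∑' k, ‖X j k‖ ^ (2 * p)) ^ (1 / (1 - p)) := by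
  rw [rowNorm, ← rpow_mul (tsum_nonneg fun _ => rpow_nonneg (norm_nonneg _) _)]
  congr 1
  field_simp

lemma xiNorm_eq_rowNorm (hp : p ≠ 0) :
    xiNorm p X =
      (∑' j, rowNorm p X j ^ (2 * (p / (1 - p)))) ^ (1 / (2 * (p / (1 - p)))) := by
  simp_rw [rowNorm_rpow X hp, xiNorm]
  congr 1
  field_simp

end RowNorm

theorem Lq_diag_le_xiNorm_mul {p : ℝ} (hp0 : 0 < p) (hp1 : p < 1) {X Y : ℕ → ℕ → ℂ}
    (hX : HasXiNorm p X) (hY : HasXiNorm p Y) {d : ℕ → ℂ}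
    (hd : ∀ j, HasSum (fun l => X j l * Y j l) (d j)) :
    (Summable fun j => ‖d j‖ ^ (p / (1 - p))) ∧
      (∑' j, ‖d j‖ ^ (p / (1 - p))) ^ ((1 - p) / p) ≤ xiNorm p X * xiNorm p Y := by
  set q := p / (1 - p)
  have hq : 0 < q := div_pos hp0 (by linarith)
  have hholder : (2 * q).HolderTriple (2 * q) q :=
    ⟨by field_simp; ring, by positivity, by positivity⟩
  have hrow : ∀ j, ‖d j‖ ≤ rowNorm p X j * rowNorm p Y j := fun j =>
    norm_le_Lr_mul_Lr_of_hasSum_mul (by positivity) (by linarith) (hX.1 j) (hY.1 j) (hd j)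
  have hsumX : Summable fun j => rowNorm p X j ^ (2 * q) := by
    convert hX.2 using 2 with j
    exact rowNorm_rpow X hp0.ne' j
  have hsumY : Summable fun j => rowNorm p Y j ^ (2 * q) := by
    convert hY.2 using 2 with j
    exact rowNorm_rpow Y hp0.ne' j
  have hle : ∀ j, ‖d j‖ ^ q ≤ (rowNorm p X j * rowNorm p Y j) ^ q := fun j =>
    rpow_le_rpow (norm_nonneg _) (hrow j) hq.le
  have hprod := summable_Lr_of_Lp_Lq_of_nonneg hholder (rowNorm_nonneg X) (rowNorm_nonneg Y)
    hsumX hsumY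
  have hsum := Summable.of_nonneg_of_le (fun j => rpow_nonneg (norm_nonneg _) _) hle hprod
  refine ⟨hsum, ?_⟩
  rw [xiNorm_eq_rowNorm X hp0.ne', xiNorm_eq_rowNorm Y hp0.ne', ← one_div_div]
  calc (∑' j, ‖d j‖ ^ q) ^ (1 / q)
      ≤ (∑' j, (rowNorm p X j * rowNorm p Y j) ^ q) ^ (1 / q) :=
        rpow_le_rpow (tsum_nonneg fun _ => rpow_nonneg (norm_nonneg _) _)
          (hsum.tsum_le_tsum hle hprod) (by positivity)
    _ ≤ _ := Lr_le_Lp_mul_Lq_tsum_of_nonneg hholder (rowNorm_nonneg X) (rowNorm_nonneg Y)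
        hsumX hsumY

def diag (d : ℕ → ℂ) : ℕ → ℕ → ℂ := fun j k => if j = k then d j else 0

lemma hasSum_diag_mul_diag (a b : ℕ → ℂ) (j k : ℕ) :
    HasSum (fun l => diag a j l * diag b k l) (diag (a * b) j k) := by
  convert hasSum_single (f := fun l => diag a j l * diag b k l) j
    fun l hl => by simp [diag, Ne.symm hl] using 1
  by_cases h : j = k <;> simp [diag, h, eq_comm]

section Diag

variable {p : ℝ} (d : ℕ → ℂ)

lemma norm_diag_rpow_eq_zero (hp : p ≠ 0) {j k : ℕ} (hjk : k ≠ j) :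
    ‖diag d j k‖ ^ (2 * p) = 0 := by
  simp [diag, Ne.symm hjk, hp]

lemma rowSum_diag_rpow (hp : p ≠ 0) (j : ℕ) :
    (∑' k, ‖diag d j k‖ ^ (2 * p)) ^ (1 / (1 - p)) = ‖d j‖ ^ (2 * p / (1 - p)) := by
  rw [tsum_eq_single j fun k hk => norm_diag_rpow_eq_zero d hp hk, ← rpow_mul (norm_nonneg _),
    mul_one_div]
  simp [diag]

lemma hasXiNorm_diag (hp : p ≠ 0) (hd : Summable fun j => ‖d j‖ ^ (2 * p / (1 - p))) :
    HasXiNorm p (diag d) :=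
  ⟨fun j => (hasSum_single j fun _ hk => norm_diag_rpow_eq_zero d hp hk).summable,
    by simpa only [rowSum_diag_rpow d hp] using hd⟩

lemma xiNorm_diag (hp : p ≠ 0) :
    xiNorm p (diag d) = (∑' j, ‖d j‖ ^ (2 * p / (1 - p))) ^ ((1 - p) / (2 * p)) := by
  simp only [xiNorm, rowSum_diag_rpow d hp]

end Diag

lemma ofReal_sqrt_norm_mul_div (z : ℂ) : (√‖z‖ : ℂ) * (z / √‖z‖) = z := by
  rcases eq_or_ne z 0 with rfl | hz
  · simp
  · exact mul_div_cancel₀ z (by simpa using hz)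

lemma norm_div_ofReal_sqrt_norm (z : ℂ) : ‖z / √‖z‖‖ = √‖z‖ := by
  rw [norm_div, Complex.norm_of_nonneg (sqrt_nonneg _), div_sqrt]

theorem rpow_tsum_mem_wReprVals_diag {p : ℝ} (hp0 : 0 < p) (hp1 : p < 1) {μ : ℕ → ℂ}
    (hμ : Summable fun j => ‖μ j‖ ^ (p / (1 - p))) :
    (∑' j, ‖μ j‖ ^ (p / (1 - p))) ^ ((1 - p) / p) ∈ wReprVals p (diag μ) := by
  set a : ℕ → ℂ := fun j => (√‖μ j‖ : ℂ)
  set b : ℕ → ℂ := fun j => μ j / √‖μ j‖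
  have hsqrt : ∀ j, (√‖μ j‖) ^ (2 * p / (1 - p)) = ‖μ j‖ ^ (p / (1 - p)) := fun j => by
    rw [sqrt_eq_rpow, ← rpow_mul (norm_nonneg _)]
    ring_nf
  have ha : ∀ j, ‖a j‖ ^ (2 * p / (1 - p)) = ‖μ j‖ ^ (p / (1 - p)) := fun j => by
    rw [← hsqrt, Complex.norm_of_nonneg (sqrt_nonneg _)]
  have hb : ∀ j, ‖b j‖ ^ (2 * p / (1 - p)) = ‖μ j‖ ^ (p / (1 - p)) := fun j => by
    rw [← hsqrt, norm_div_ofReal_sqrt_norm]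
  have hab : a * b = μ := funext fun j => ofReal_sqrt_norm_mul_div (μ j)
  refine ⟨diag a, diag b, hasXiNorm_diag a hp0.ne' (by simpa only [ha] using hμ),
    hasXiNorm_diag b hp0.ne' (by simpa only [hb] using hμ),
    fun j k => hab ▸ hasSum_diag_mul_diag a b j k, ?_⟩
  have he : 0 ≤ (1 - p) / (2 * p) := div_nonneg (by linarith) (by linarith)
  rw [xiNorm_diag a hp0.ne', xiNorm_diag b hp0.ne', tsum_congr ha, tsum_congr hb,
    ← rpow_add_of_nonneg (tsum_nonneg fun _ => rpow_nonneg (norm_nonneg _) _) he he]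
  ring_nf

/-- Theorem 6.4: for `0 < p < 1`, a diagonal matrix `W = diag(μ)` belongs to `𝒲_p` iff
`∑_j |μ_j|^{p/(1-p)} < ∞`, in which case
`‖W‖_{𝒲_p} = (∑_j |μ_j|^{p/(1-p)})^{(1-p)/p}`. -/
theorem stmt13 (p : ℝ) (hp0 : 0 < p) (hp1 : p < 1) (μ : ℕ → ℂ) :
    ((wReprVals p fun j k : ℕ => if j = k then μ j else 0).Nonempty ↔
      Summable fun j => ‖μ j‖ ^ (p / (1 - p))) ∧
    ((Summable fun j => ‖μ j‖ ^ (p / (1 - p))) →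
      sInf (wReprVals p fun j k : ℕ => if j = k then μ j else 0) =
        (∑' j, ‖μ j‖ ^ (p / (1 - p))) ^ ((1 - p) / p)) := by
  have hlower : ∀ c ∈ wReprVals p (diag μ), (Summable fun j => ‖μ j‖ ^ (p / (1 - p))) ∧
      (∑' j, ‖μ j‖ ^ (p / (1 - p))) ^ ((1 - p) / p) ≤ c := by
    rintro c ⟨X, Y, hX, hY, hW, rfl⟩
    exact Lq_diag_le_xiNorm_mul hp0 hp1 hX hY fun j => by simpa [diag] using hW j j
  have hupper := @rpow_tsum_mem_wReprVals_diag p hp0 hp1 μ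
  refine ⟨⟨fun ⟨c, hc⟩ => (hlower c hc).1, fun hμ => ⟨_, hupper hμ⟩⟩, fun hμ => ?_⟩
  exact IsLeast.csInf_eq ⟨hupper hμ, fun c hc => (hlower c hc).2⟩
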